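/- Fix an integer k ≥ 1 and real numbers c_1, …, c_k with c_a > 0 for all a and c_1 + ⋯ + c_k < 1. Then there exists a constant C > 0, depending only on k and c_1, …, c_k, such that for every integer N ≥ 1, every 1 ≤ ℓ ≤ k, and every choice of indices i_1, …, i_ℓ ∈ {1, …, N}, setting w_j = (N − j) + Σ_{a=1}^{ℓ−1} c_a·𝟙[i_a = j] and σ = c_1 + ⋯ + c_{ℓ−1}, one has ∏_{j ∈ {1,…,N}, j ≠ i_ℓ} (c_ℓ + w_{i_ℓ} − w_j)/(w_{i_ℓ} − w_j) ≤ C · ∏_{j=2}^{N} (σ + c_ℓ + j − 1)/(σ + j − 1). -/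

import Mathlib

open Finset

/-!
Write `d_j = w_{i_ℓ} - w_j = (j - i_ℓ) + (ε_{i_ℓ} - ε_j)`, where the shifts satisfy
`0 ≤ ε ≤ σ` and `σ + c_ℓ ≤ S := c_1 + ⋯ + c_k < 1`. For `j < i_ℓ` both `d_j` and `c_ℓ + d_j` are
negative, so the factor `(c_ℓ + d_j) / d_j` lies in `[0, 1]`. For `j > i_ℓ` we have
`d_j ≥ 1 - S`, and even `d_j ≥ j - i_ℓ` unless `j` is one of the at most `ℓ - 1` shifted
coordinates; since `(c + d) / d` decreases in `d`, the product is at most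
`(1 - S)^{-(k-1)} ∏_{t=1}^{N-1} (c_ℓ + t) / t`. Finally each `(c_ℓ + t) / t` exceeds the
corresponding factor `(σ + c_ℓ + t) / (σ + t)` of the right-hand side by at most `1 + t⁻²`,
and `∏ (1 + t⁻²) ≤ exp (∑ t⁻²) ≤ e²`.
-/

/-- The evaluation point obtained from `ρ_N = (N-1, N-2, …, 1, 0)` (indexed by `j ∈ {1,…,N}`,
so coordinate `j` equals `N - j`) by shifting coordinate `i a` by `c a` for each
`a = 1, …, ℓ-1`; shifts at a repeated coordinate accumulate. -/
def wvec (N ℓ : ℕ) (c : ℕ → ℝ) (i : ℕ → ℕ) (j : ℕ) : ℝ :=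
  ((N : ℝ) - (j : ℝ)) + ∑ a ∈ Finset.Ico 1 ℓ, c a * (if i a = j then 1 else 0)

section Ratio

variable {c d s t u : ℝ}

lemma add_div_self_le_of_le (hc : 0 ≤ c) (hu : 0 < u) (hud : u ≤ d) :
    (c + d) / d ≤ (c + u) / u := by
  rw [add_div, add_div, div_self hu.ne', div_self (hu.trans_le hud).ne']
  gcongr

lemma add_div_self_le_one_of_neg (hc : 0 ≤ c) (hd : d < 0) : (c + d) / d ≤ 1 := by
  rw [div_le_one_of_neg hd]
  linarith

/-- `(c + t)(s + t) = t (s + c + t) + c s`, so the two ratios differ by a factor `1 + O(t⁻²)`. -/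
lemma add_div_self_le_exp_mul (hc : 0 ≤ c) (hs : 0 ≤ s) (hcs : c * s ≤ 1) (ht : 0 < t) :
    (c + t) / t ≤ Real.exp (t ^ 2)⁻¹ * ((s + c + t) / (s + t)) := by
  calc (c + t) / t ≤ ((t ^ 2)⁻¹ + 1) * ((s + c + t) / (s + t)) := by
        rw [show ((t ^ 2)⁻¹ + 1) * ((s + c + t) / (s + t)) =
            (1 + t ^ 2) * (s + c + t) / (t ^ 2 * (s + t)) by field_simp,
          div_le_div_iff₀ ht (by positivity)]
        nlinarith [mul_le_mul_of_nonneg_left hcs ht.le]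
    _ ≤ Real.exp (t ^ 2)⁻¹ * ((s + c + t) / (s + t)) := by
        gcongr
        exact Real.add_one_le_exp _

lemma prod_Ioc_exp_inv_sq_le (n : ℕ) : ∏ t ∈ Ioc 0 n, Real.exp (((t : ℝ) ^ 2)⁻¹) ≤ Real.exp 2 := by
  rw [← Real.exp_sum, Real.exp_le_exp]
  have : Ioc 0 n = Ioo 0 (n + 1) := by ext; simp only [mem_Ioc, mem_Ioo]; omega
  simpa [this] using sum_Ioo_inv_sq_le (α := ℝ) 0 (n + 1)

lemma prod_Ioc_add_div_self_le_exp_two_mul (hc : 0 ≤ c) (hs : 0 ≤ s) (hcs : c * s ≤ 1) (n : ℕ) :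
    ∏ t ∈ Ioc 0 n, (c + t) / (t : ℝ) ≤
      Real.exp 2 * ∏ t ∈ Ioc 0 n, (s + c + t) / (s + (t : ℝ)) :=
  calc ∏ t ∈ Ioc 0 n, (c + t) / (t : ℝ)
      ≤ ∏ t ∈ Ioc 0 n, Real.exp (((t : ℝ) ^ 2)⁻¹) * ((s + c + t) / (s + (t : ℝ))) :=
        prod_le_prod (fun _ _ ↦ by positivity) fun t ht ↦
          add_div_self_le_exp_mul hc hs hcs (by simpa using (mem_Ioc.mp ht).1)
    _ = (∏ t ∈ Ioc 0 n, Real.exp (((t : ℝ) ^ 2)⁻¹)) *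
          ∏ t ∈ Ioc 0 n, (s + c + t) / (s + (t : ℝ)) := prod_mul_distrib
    _ ≤ Real.exp 2 * ∏ t ∈ Ioc 0 n, (s + c + t) / (s + (t : ℝ)) := by
        gcongr
        exact prod_Ioc_exp_inv_sq_le n

lemma prod_Ioc_add_div_self_le_of_le (hc : 0 ≤ c) {m n : ℕ} (h : m ≤ n) :
    ∏ t ∈ Ioc 0 m, (c + t) / (t : ℝ) ≤ ∏ t ∈ Ioc 0 n, (c + t) / (t : ℝ) :=
  prod_le_prod_of_subset_of_one_le (Ioc_subset_Ioc_right h) (fun _ _ ↦ by positivity)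
    fun t ht _ ↦ by
      rw [one_le_div (by simpa using (mem_Ioc.mp ht).1)]
      linarith

end Ratio

lemma prod_Ioc_comp_sub_eq (f : ℝ → ℝ) {m n : ℕ} (h : m ≤ n) :
    ∏ j ∈ Ioc m n, f ((j : ℝ) - m) = ∏ t ∈ Ioc 0 (n - m), f t := by
  obtain ⟨k, rfl⟩ := Nat.exists_eq_add_of_le h
  rw [Nat.add_sub_cancel_left,
    show Ioc m (m + k) = (Ioc 0 k).map (addRightEmbedding m) by simp [add_comm], prod_map]
  simp

def shiftAt (ℓ : ℕ) (c : ℕ → ℝ) (i : ℕ → ℕ) (j : ℕ) : ℝ :=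
  ∑ a ∈ Ico 1 ℓ, c a * if i a = j then 1 else 0

noncomputable def prefactorTerm (N ℓ : ℕ) (c : ℕ → ℝ) (i : ℕ → ℕ) (m j : ℕ) : ℝ :=
  (c ℓ + wvec N ℓ c i m - wvec N ℓ c i j) / (wvec N ℓ c i m - wvec N ℓ c i j)

section Shift

variable {N ℓ m j : ℕ} {c : ℕ → ℝ} {i : ℕ → ℕ}

lemma wvec_sub_wvec :
    wvec N ℓ c i m - wvec N ℓ c i j = (j - m : ℝ) + (shiftAt ℓ c i m - shiftAt ℓ c i j) := by
  unfold wvec shiftAt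
  ring

lemma prefactorTerm_eq :
    prefactorTerm N ℓ c i m j =
      (c ℓ + (wvec N ℓ c i m - wvec N ℓ c i j)) / (wvec N ℓ c i m - wvec N ℓ c i j) := by
  rw [prefactorTerm, add_sub_assoc]

lemma shiftAt_eq_zero (hj : j ∉ (Ico 1 ℓ).image i) : shiftAt ℓ c i j = 0 :=
  sum_eq_zero fun a ha ↦ by rw [if_neg fun h ↦ hj (mem_image.mpr ⟨a, ha, h⟩), mul_zero]

variable (hc : ∀ a ∈ Ico 1 ℓ, 0 ≤ c a)
include hc

lemma shiftAt_nonneg (j : ℕ) : 0 ≤ shiftAt ℓ c i j :=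
  sum_nonneg fun a ha ↦ mul_nonneg (hc a ha) (by split_ifs <;> norm_num)

lemma shiftAt_le_sum (j : ℕ) : shiftAt ℓ c i j ≤ ∑ a ∈ Ico 1 ℓ, c a :=
  sum_le_sum fun a ha ↦ mul_le_of_le_one_right (hc a ha) (by split_ifs <;> norm_num)

lemma wvec_sub_wvec_le_of_lt (hjm : j < m) :
    wvec N ℓ c i m - wvec N ℓ c i j ≤ ∑ a ∈ Ico 1 ℓ, c a - 1 := by
  have : (j : ℝ) + 1 ≤ m := by exact_mod_cast hjm
  rw [wvec_sub_wvec]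
  linarith [shiftAt_le_sum (i := i) hc m, shiftAt_nonneg (i := i) hc j]

lemma one_sub_sum_le_wvec_sub_wvec (hmj : m < j) :
    1 - ∑ a ∈ Ico 1 ℓ, c a ≤ wvec N ℓ c i m - wvec N ℓ c i j := by
  have : (m : ℝ) + 1 ≤ j := by exact_mod_cast hmj
  rw [wvec_sub_wvec]
  linarith [shiftAt_le_sum (i := i) hc j, shiftAt_nonneg (i := i) hc m]

lemma sub_le_wvec_sub_wvec (hj : j ∉ (Ico 1 ℓ).image i) :
    (j - m : ℝ) ≤ wvec N ℓ c i m - wvec N ℓ c i j := by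
  rw [wvec_sub_wvec, shiftAt_eq_zero hj]
  linarith [shiftAt_nonneg (i := i) hc m]

lemma prefactorTerm_mem_Icc_of_lt (hcℓ : 0 ≤ c ℓ) (hσ : ∑ a ∈ Ico 1 ℓ, c a + c ℓ < 1)
    (hjm : j < m) : prefactorTerm N ℓ c i m j ∈ Set.Icc 0 1 := by
  have hd := wvec_sub_wvec_le_of_lt (N := N) (i := i) hc hjm
  rw [prefactorTerm_eq]
  exact ⟨div_nonneg_of_nonpos (by linarith) (by linarith),
    add_div_self_le_one_of_neg hcℓ (by linarith)⟩

variable {S : ℝ} (hcℓ : 0 ≤ c ℓ) (hS : ∑ a ∈ Ico 1 ℓ, c a + c ℓ ≤ S) (hS1 : S < 1)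
include hcℓ hS hS1

lemma prefactorTerm_nonneg_of_lt (hmj : m < j) : 0 ≤ prefactorTerm N ℓ c i m j := by
  have hd := one_sub_sum_le_wvec_sub_wvec (N := N) (i := i) hc hmj
  rw [prefactorTerm_eq]
  exact div_nonneg (by linarith) (by linarith)

lemma prefactorTerm_le_of_lt (hmj : m < j) :
    prefactorTerm N ℓ c i m j ≤
      (if j ∈ (Ico 1 ℓ).image i then (1 - S)⁻¹ else 1) * ((c ℓ + (j - m)) / (j - m)) := by
  have hjm : (1 : ℝ) ≤ j - m := by
    have : (m : ℝ) + 1 ≤ j := by exact_mod_cast hmj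
    linarith
  rw [prefactorTerm_eq]
  split_ifs with hj
  · have hd := one_sub_sum_le_wvec_sub_wvec (N := N) (i := i) hc hmj
    calc (c ℓ + (wvec N ℓ c i m - wvec N ℓ c i j)) / (wvec N ℓ c i m - wvec N ℓ c i j)
        ≤ (c ℓ + (1 - S)) / (1 - S) :=
          add_div_self_le_of_le hcℓ (by linarith) (by linarith [sum_nonneg hc])
      _ ≤ (1 - S)⁻¹ := by
          rw [div_eq_mul_inv]
          exact mul_le_of_le_one_left (by simp; linarith) (by linarith [sum_nonneg hc])
      _ ≤ (1 - S)⁻¹ * ((c ℓ + (j - m)) / (j - m)) :=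
          le_mul_of_one_le_right (by simp; linarith)
            ((one_le_div (by linarith)).mpr (by linarith))
  · rw [one_mul]
    exact add_div_self_le_of_le hcℓ (by linarith) (sub_le_wvec_sub_wvec hc hj)

lemma prod_Ioc_prefactorTerm_le (hmN : m ≤ N) :
    ∏ j ∈ Ioc m N, prefactorTerm N ℓ c i m j ≤
      (1 - S)⁻¹ ^ (ℓ - 1) * ∏ t ∈ Ioc 0 (N - m), (c ℓ + t) / (t : ℝ) := by
  have hK : 1 ≤ (1 - S)⁻¹ := by
    rw [one_le_inv₀ (by linarith)]
    linarith [sum_nonneg hc]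
  calc ∏ j ∈ Ioc m N, prefactorTerm N ℓ c i m j
      ≤ ∏ j ∈ Ioc m N, (if j ∈ (Ico 1 ℓ).image i then (1 - S)⁻¹ else 1) *
          ((c ℓ + (j - m)) / (j - m)) :=
        prod_le_prod (fun j hj ↦ prefactorTerm_nonneg_of_lt hc hcℓ hS hS1 (mem_Ioc.mp hj).1)
          fun j hj ↦ prefactorTerm_le_of_lt hc hcℓ hS hS1 (mem_Ioc.mp hj).1
    _ = (1 - S)⁻¹ ^ #(Ioc m N ∩ (Ico 1 ℓ).image i) *
          ∏ t ∈ Ioc 0 (N - m), (c ℓ + t) / (t : ℝ) := by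
        rw [prod_mul_distrib, prod_ite_mem, prod_const,
          prod_Ioc_comp_sub_eq (fun t ↦ (c ℓ + t) / t) hmN]
    _ ≤ (1 - S)⁻¹ ^ (ℓ - 1) * ∏ t ∈ Ioc 0 (N - m), (c ℓ + t) / (t : ℝ) := by
        gcongr
        calc #(Ioc m N ∩ (Ico 1 ℓ).image i) ≤ #((Ico 1 ℓ).image i) := card_le_card inter_subset_right
            _ ≤ ℓ - 1 := card_image_le.trans (Nat.card_Ico 1 ℓ).le

lemma prod_erase_prefactorTerm_le (hmN : m ≤ N) :
    ∏ j ∈ (Icc 1 N).erase m, prefactorTerm N ℓ c i m j ≤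
      (1 - S)⁻¹ ^ (ℓ - 1) * ∏ t ∈ Ioc 0 (N - m), (c ℓ + t) / (t : ℝ) := by
  have hsplit : (Icc 1 N).erase m = Ico 1 m ∪ Ioc m N := by
    ext j
    simp only [mem_erase, mem_Icc, mem_union, mem_Ico, mem_Ioc]
    omega
  have hdisj : Disjoint (Ico 1 m) (Ioc m N) := disjoint_left.mpr fun j h h' ↦ by
    rw [mem_Ico] at h
    rw [mem_Ioc] at h'
    omega
  have hlow (j) (hj : j ∈ Ico 1 m) := prefactorTerm_mem_Icc_of_lt (N := N) (i := i) hc hcℓ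
    (hS.trans_lt hS1) (mem_Ico.mp hj).2
  rw [hsplit, prod_union hdisj]
  refine (mul_le_of_le_one_left ?_ ?_).trans (prod_Ioc_prefactorTerm_le hc hcℓ hS hS1 hmN)
  · exact prod_nonneg fun j hj ↦ prefactorTerm_nonneg_of_lt hc hcℓ hS hS1 (mem_Ioc.mp hj).1
  · exact prod_le_one (fun j hj ↦ (hlow j hj).1) fun j hj ↦ (hlow j hj).2

end Shift

theorem stmt16_general (k : ℕ) (c : ℕ → ℝ)
    (hc : ∀ a ∈ Finset.Icc 1 k, 0 < c a)
    (hcsum : ∑ a ∈ Finset.Icc 1 k, c a < 1) :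
    ∃ C > (0 : ℝ), ∀ N : ℕ, 1 ≤ N → ∀ ℓ : ℕ, 1 ≤ ℓ → ℓ ≤ k →
      ∀ i : ℕ → ℕ, (∀ a ∈ Finset.Icc 1 ℓ, i a ∈ Finset.Icc 1 N) →
      ∏ j ∈ (Finset.Icc 1 N).erase (i ℓ),
          (c ℓ + wvec N ℓ c i (i ℓ) - wvec N ℓ c i j) /
            (wvec N ℓ c i (i ℓ) - wvec N ℓ c i j)
        ≤ C * ∏ j ∈ Finset.Icc 2 N,
            ((∑ a ∈ Finset.Ico 1 ℓ, c a) + c ℓ + (j : ℝ) - 1) /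
              ((∑ a ∈ Finset.Ico 1 ℓ, c a) + (j : ℝ) - 1) := by
  set S := ∑ a ∈ Icc 1 k, c a
  have hS0 : 0 ≤ S := sum_nonneg fun a ha ↦ (hc a ha).le
  have hK : 1 ≤ (1 - S)⁻¹ := (one_le_inv₀ (by linarith)).mpr (by linarith)
  refine ⟨(1 - S)⁻¹ ^ (k - 1) * Real.exp 2, by positivity, ?_⟩
  intro N hN ℓ hℓ hℓk i hi
  obtain ⟨hm1, hmN⟩ := mem_Icc.mp (hi ℓ (mem_Icc.mpr ⟨hℓ, le_rfl⟩))
  set σ := ∑ a ∈ Ico 1 ℓ, c a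
  have hcσ : ∀ a ∈ Ico 1 ℓ, 0 ≤ c a := fun a ha ↦
    (hc a (Ico_subset_Icc_self.trans (Icc_subset_Icc_right hℓk) ha)).le
  have hσ : 0 ≤ σ := sum_nonneg hcσ
  have hcℓ : 0 ≤ c ℓ := (hc ℓ (mem_Icc.mpr ⟨hℓ, hℓk⟩)).le
  have hσS : σ + c ℓ ≤ S := by
    rw [← sum_Ico_succ_top hℓ, Ico_add_one_right_eq_Icc]
    exact sum_le_sum_of_subset_of_nonneg (Icc_subset_Icc_right hℓk) fun a ha _ ↦ (hc a ha).le
  have htarget : ∏ j ∈ Icc 2 N, (σ + c ℓ + j - 1) / (σ + j - 1) =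
      ∏ t ∈ Ioc 0 (N - 1), (σ + c ℓ + t) / (σ + (t : ℝ)) := by
    rw [← prod_Ioc_comp_sub_eq (fun t ↦ (σ + c ℓ + t) / (σ + t)) hN, ← Icc_add_one_left_eq_Ioc]
    exact prod_congr rfl fun j _ ↦ by push_cast; ring_nf
  change ∏ j ∈ _, prefactorTerm N ℓ c i (i ℓ) j ≤ _
  rw [htarget]
  calc ∏ j ∈ (Icc 1 N).erase (i ℓ), prefactorTerm N ℓ c i (i ℓ) j
      ≤ (1 - S)⁻¹ ^ (ℓ - 1) * ∏ t ∈ Ioc 0 (N - i ℓ), (c ℓ + t) / (t : ℝ) :=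
        prod_erase_prefactorTerm_le hcσ hcℓ hσS hcsum hmN
    _ ≤ (1 - S)⁻¹ ^ (k - 1) * ∏ t ∈ Ioc 0 (N - 1), (c ℓ + t) / (t : ℝ) := by
        exact mul_le_mul (pow_le_pow_right₀ hK (by omega))
          (prod_Ioc_add_div_self_le_of_le hcℓ (by omega)) (prod_nonneg fun _ _ ↦ by positivity)
          (by positivity)
    _ ≤ (1 - S)⁻¹ ^ (k - 1) *
          (Real.exp 2 * ∏ t ∈ Ioc 0 (N - 1), (σ + c ℓ + t) / (σ + (t : ℝ))) := by
        gcongr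
        exact prod_Ioc_add_div_self_le_exp_two_mul hcℓ hσ
          (mul_le_one₀ (by linarith) hσ (by linarith)) _
    _ = _ := (mul_assoc _ _ _).symm

theorem stmt16 (k : ℕ) (hk : 1 ≤ k) (c : ℕ → ℝ)
    (hc : ∀ a ∈ Finset.Icc 1 k, 0 < c a)
    (hcsum : ∑ a ∈ Finset.Icc 1 k, c a < 1) :
    ∃ C > (0 : ℝ), ∀ N : ℕ, 1 ≤ N → ∀ ℓ : ℕ, 1 ≤ ℓ → ℓ ≤ k →
      ∀ i : ℕ → ℕ, (∀ a ∈ Finset.Icc 1 ℓ, i a ∈ Finset.Icc 1 N) →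
      ∏ j ∈ (Finset.Icc 1 N).erase (i ℓ),
          (c ℓ + wvec N ℓ c i (i ℓ) - wvec N ℓ c i j) /
            (wvec N ℓ c i (i ℓ) - wvec N ℓ c i j)
        ≤ C * ∏ j ∈ Finset.Icc 2 N,
            ((∑ a ∈ Finset.Ico 1 ℓ, c a) + c ℓ + (j : ℝ) - 1) /
              ((∑ a ∈ Finset.Ico 1 ℓ, c a) + (j : ℝ) - 1) :=
  stmt16_general k c hc hcsum
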